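/- arXiv:1804.05360 — 3 statements merged into one kernel-verified Lean document; each statement's English description precedes it below -/
import Mathlib

section
/- Let u₀ ∈ ℝ satisfy u₀⁴ + u₀³ + 2u₀² + 4u₀ + 1 = 0. Then the line {(x, y) ∈ ℝ² : y = u₀x} is invariant under the flow of the system ẋ = x²y + y³, ẏ = -4x²y - y³ - xy² - x³: if (x, y) : I → ℝ² is a solution defined on an interval I and y(t₀) = u₀·x(t₀) for some t₀ ∈ I, then y(t) = u₀·x(t) for all t ∈ I. -/
/-!
Put `w = y - u₀ x`. Along any solution, `ẇ = Q w + p(u₀) x³` with `p` the quartic and `Q` a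
quadratic form in `(x, y)`, so at a root of `p` the function `w` solves the scalar linear
equation `ẇ = Q(t) w` with continuous coefficient. Such an equation is Lipschitz in `w` on
compact time intervals, and uniqueness of solutions forces `w ≡ 0` once `w(t₀) = 0`.
-/

open Set

section LinearODE

variable {E : Type*} [NormedAddCommGroup E] [NormedSpace ℝ E] {Q : ℝ → ℝ} {w : ℝ → E}

theorem eqOn_zero_of_hasDerivAt_smul_of_mem_Icc {a b t₀ : ℝ} (hQ : ContinuousOn Q (Icc a b))
    (hw : ∀ t ∈ Icc a b, HasDerivAt w (Q t • w t) t) (ht₀ : t₀ ∈ Icc a b) (h0 : w t₀ = 0) :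
    EqOn w 0 (Icc a b) := by
  obtain ⟨C, hC⟩ := isCompact_Icc.exists_bound_of_continuousOn hQ
  have hlip : ∀ t ∈ Icc a b, LipschitzOnWith C.toNNReal (fun z : E ↦ Q t • z) univ := by
    intro t ht
    refine ((lipschitzWith_smul (Q t)).weaken ?_).lipschitzOnWith
    rw [← NNReal.coe_le_coe, coe_nnnorm]
    exact (hC t ht).trans C.le_coe_toNNReal
  have hwc : ContinuousOn w (Icc a b) := HasDerivAt.continuousOn hw
  have hzero : ∀ t, HasDerivAt (0 : ℝ → E) (Q t • (0 : ℝ → E) t) t := fun t ↦ by simp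
  rw [← Icc_union_Icc_eq_Icc ht₀.1 ht₀.2]
  refine EqOn.union ?_ ?_
  · have hsub : Ioc a t₀ ⊆ Icc a b := fun t ht ↦ ⟨ht.1.le, ht.2.trans ht₀.2⟩
    exact ODE_solution_unique_of_mem_Icc_left (fun t ht ↦ hlip t (hsub ht))
      (hwc.mono (Icc_subset_Icc_right ht₀.2)) (fun t ht ↦ (hw t (hsub ht)).hasDerivWithinAt)
      (fun _ _ ↦ mem_univ _) continuousOn_const (fun t _ ↦ (hzero t).hasDerivWithinAt)
      (fun _ _ ↦ mem_univ _) h0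
  · have hsub : Ico t₀ b ⊆ Icc a b := fun t ht ↦ ⟨ht₀.1.trans ht.1, ht.2.le⟩
    exact ODE_solution_unique_of_mem_Icc_right (fun t ht ↦ hlip t (hsub ht))
      (hwc.mono (Icc_subset_Icc_left ht₀.1)) (fun t ht ↦ (hw t (hsub ht)).hasDerivWithinAt)
      (fun _ _ ↦ mem_univ _) continuousOn_const (fun t _ ↦ (hzero t).hasDerivWithinAt)
      (fun _ _ ↦ mem_univ _) h0

theorem eqOn_zero_of_hasDerivAt_smul {I : Set ℝ} (hI : I.OrdConnected) {t₀ : ℝ}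
    (hQ : ContinuousOn Q I) (hw : ∀ t ∈ I, HasDerivAt w (Q t • w t) t) (ht₀ : t₀ ∈ I)
    (h0 : w t₀ = 0) : EqOn w 0 I := fun t ht ↦ by
  have hsub : uIcc t₀ t ⊆ I := hI.uIcc_subset ht₀ ht
  exact eqOn_zero_of_hasDerivAt_smul_of_mem_Icc (hQ.mono hsub) (fun s hs ↦ hw s (hsub hs))
    left_mem_uIcc h0 right_mem_uIcc

end LinearODE

def lineCoeff (u X Y : ℝ) : ℝ :=
  -(1 + u) * Y ^ 2 - (1 + u + u ^ 2) * X * Y - (4 + 2 * u + u ^ 2 + u ^ 3) * X ^ 2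

theorem field_sub_mul_field (u X Y : ℝ) :
    (-(4 * X ^ 2 * Y) - Y ^ 3 - X * Y ^ 2 - X ^ 3) - u * (X ^ 2 * Y + Y ^ 3)
      = lineCoeff u X Y * (Y - u * X) - (u ^ 4 + u ^ 3 + 2 * u ^ 2 + 4 * u + 1) * X ^ 3 := by
  unfold lineCoeff; ring

/-- If `u₀` is a root of `u⁴ + u³ + 2u² + 4u + 1`, the line `y = u₀x` is invariant
under the flow of `ẋ = x²y + y³`, `ẏ = -4x²y - y³ - xy² - x³`: a solution on an
interval `I` with `y(t₀) = u₀x(t₀)` for some `t₀ ∈ I` satisfies `y = u₀x` on all of `I`. -/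
theorem stmt_8 (u₀ : ℝ) (hu : u₀ ^ 4 + u₀ ^ 3 + 2 * u₀ ^ 2 + 4 * u₀ + 1 = 0)
    (I : Set ℝ) (hI : I.OrdConnected) (x y : ℝ → ℝ)
    (hx : ∀ t ∈ I, HasDerivAt x (x t ^ 2 * y t + y t ^ 3) t)
    (hy : ∀ t ∈ I, HasDerivAt y (-(4 * x t ^ 2 * y t) - y t ^ 3 - x t * y t ^ 2 - x t ^ 3) t)
    (t₀ : ℝ) (ht₀ : t₀ ∈ I) (h0 : y t₀ = u₀ * x t₀) :
    ∀ t ∈ I, y t = u₀ * x t := by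
  have hw : ∀ t ∈ I, HasDerivAt (fun t ↦ y t - u₀ * x t)
      (lineCoeff u₀ (x t) (y t) • (y t - u₀ * x t)) t := fun t ht ↦ by
    refine ((hy t ht).sub ((hx t ht).const_mul u₀)).congr_deriv ?_
    rw [field_sub_mul_field, hu, smul_eq_mul, zero_mul, sub_zero]
  have hQ : ContinuousOn (fun t ↦ lineCoeff u₀ (x t) (y t)) I := by
    have hxc := HasDerivAt.continuousOn hx
    have hyc := HasDerivAt.continuousOn hy
    unfold lineCoeff
    fun_prop
  intro t ht
  exact sub_eq_zero.mp (eqOn_zero_of_hasDerivAt_smul hI hQ hw ht₀ (sub_eq_zero.mpr h0) ht)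
end

section
/- The line {(x, y) ∈ ℝ² : y = -x} is invariant under the flow of the system ẋ = ¼x²y + y³, ẏ = -2x²y - y³ - ¼xy² - (3/2)x³: if (x, y) : I → ℝ² is a solution on an interval I with y(t₀) = -x(t₀) for some t₀ ∈ I, then y(t) = -x(t) for all t ∈ I. -/
/-!
Along a solution, `w = x + y` satisfies the scalar linear equation
`w' = -¼ x (y + 6x) w`, whose coefficient is continuous. Grönwall's inequality, applied on
compact subintervals forward and (after reversing time) backward from `t₀`, forces `w ≡ 0`
once `w t₀ = 0`.
-/

open Set

section LinearODE

variable {E : Type*} [NormedAddCommGroup E] [NormedSpace ℝ E] {w : ℝ → E} {g : ℝ → ℝ}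

theorem eq_zero_of_hasDerivAt_smul_self_of_eq_zero_right {a b : ℝ}
    (hg : ContinuousOn g (Icc a b)) (hw : ∀ t ∈ Icc a b, HasDerivAt w (g t • w t) t)
    (ha : w a = 0) : ∀ t ∈ Icc a b, w t = 0 := by
  obtain ⟨C, hC⟩ := isCompact_Icc.exists_bound_of_continuousOn hg
  refine eq_zero_of_abs_deriv_le_mul_abs_self_of_eq_zero_right (K := C)
    (fun t ht => (hw t ht).continuousAt.continuousWithinAt)
    (fun t ht => (hw t (Ico_subset_Icc_self ht)).hasDerivWithinAt) ha fun t ht => ?_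
  rw [norm_smul]
  exact mul_le_mul_of_nonneg_right (hC t (Ico_subset_Icc_self ht)) (norm_nonneg _)

theorem eq_zero_of_hasDerivAt_smul_self_of_eq_zero_left {a b : ℝ}
    (hg : ContinuousOn g (Icc a b)) (hw : ∀ t ∈ Icc a b, HasDerivAt w (g t • w t) t)
    (hb : w b = 0) : ∀ t ∈ Icc a b, w t = 0 := by
  have hneg : MapsTo (fun t : ℝ => -t) (Icc (-b) (-a)) (Icc a b) := fun t ht =>
    ⟨le_neg.mp ht.2, neg_le.mp ht.1⟩
  have hreversed : ∀ t ∈ Icc (-b) (-a), w (-t) = 0 := by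
    refine eq_zero_of_hasDerivAt_smul_self_of_eq_zero_right (g := fun t => -g (-t))
      (hg.comp continuousOn_neg hneg).neg (fun t ht => ?_) (by rwa [neg_neg])
    exact ((hw (-t) (hneg ht)).scomp t (hasDerivAt_neg t)).congr_deriv
      (by rw [neg_smul, one_smul, neg_smul])
  intro t ht
  simpa using hreversed (-t) ⟨neg_le_neg ht.2, neg_le_neg ht.1⟩

theorem Set.OrdConnected.eq_zero_of_hasDerivAt_smul_self {I : Set ℝ} (hI : I.OrdConnected)
    (hg : ContinuousOn g I) (hw : ∀ t ∈ I, HasDerivAt w (g t • w t) t) {t₀ : ℝ} (ht₀ : t₀ ∈ I)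
    (h0 : w t₀ = 0) : ∀ t ∈ I, w t = 0 := by
  intro t ht
  rcases le_total t₀ t with h | h
  · have hsub : Icc t₀ t ⊆ I := hI.out ht₀ ht
    exact eq_zero_of_hasDerivAt_smul_self_of_eq_zero_right (hg.mono hsub)
      (fun s hs => hw s (hsub hs)) h0 t ⟨h, le_rfl⟩
  · have hsub : Icc t t₀ ⊆ I := hI.out ht ht₀
    exact eq_zero_of_hasDerivAt_smul_self_of_eq_zero_left (hg.mono hsub)
      (fun s hs => hw s (hsub hs)) h0 t ⟨le_rfl, h⟩

end LinearODE

/-- The line `y = -x` is invariant under the flow of the Case 2 system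
`ẋ = ¼x²y + y³`, `ẏ = -2x²y - y³ - ¼xy² - (3/2)x³`: a solution on an interval `I`
with `y(t₀) = -x(t₀)` for some `t₀ ∈ I` satisfies `y = -x` on all of `I`. -/
theorem stmt_10 (I : Set ℝ) (hI : I.OrdConnected) (x y : ℝ → ℝ)
    (hx : ∀ t ∈ I, HasDerivAt x ((1/4) * x t ^ 2 * y t + y t ^ 3) t)
    (hy : ∀ t ∈ I, HasDerivAt y
      (-(2 * x t ^ 2 * y t) - y t ^ 3 - (1/4) * x t * y t ^ 2 - (3/2) * x t ^ 3) t)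
    (t₀ : ℝ) (ht₀ : t₀ ∈ I) (h0 : y t₀ = -x t₀) :
    ∀ t ∈ I, y t = -x t := by
  have hsum : ∀ t ∈ I, HasDerivAt (fun s => y s + x s)
      ((-(1/4) * x t * (y t + 6 * x t)) • (y t + x t)) t := fun t ht =>
    ((hy t ht).add (hx t ht)).congr_deriv (by rw [smul_eq_mul]; ring)
  have hxc : ContinuousOn x I := fun t ht => (hx t ht).continuousAt.continuousWithinAt
  have hyc : ContinuousOn y I := fun t ht => (hy t ht).continuousAt.continuousWithinAt
  have hcoeff : ContinuousOn (fun t => -(1/4) * x t * (y t + 6 * x t)) I := by fun_prop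
  intro t ht
  linarith [hI.eq_zero_of_hasDerivAt_smul_self hcoeff hsum ht₀ (by simp [h0]) t ht]
end

section
/- Let A be a real n×n matrix all of whose eigenvalues have strictly negative real part, and let f : ℝⁿ → ℝⁿ be continuous and locally Lipschitz with f(0) = 0 and ‖f(x)‖/‖x‖ → 0 as x → 0. Then the origin is an asymptotically stable equilibrium of ẋ = Ax + f(x): for every ε > 0 there exists δ > 0 such that every solution x(t) with ‖x(0)‖ < δ is defined for all t ≥ 0, satisfies ‖x(t)‖ < ε for all t ≥ 0, and satisfies x(t) → 0 as t → +∞. -/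
/-!
On each generalized eigenspace of `A` (over `ℂ`), `exp (t • A)` acts as `e^{tμ}` times a
polynomial in `t`; since every eigenvalue satisfies `re μ < -α` for some `α > 0`, this gives
`‖exp (t • A) v‖ ≤ C e^{-αt} ‖v‖`.

The adapted norm `N v = sup_{s ≥ 0} e^{αs} ‖exp (s • A) v‖` is equivalent to `‖·‖` and is
contracted by the linear flow: `N (exp (h • A) v) ≤ e^{-αh} N v`. Comparing a solution with the
linear flow over a short time `h` shows that the right Dini derivative of `N (x t)` is at most
`-α N (x t) + C ‖f (x t)‖`. As long as `‖f x‖ ≤ k ‖x‖` with `C k < α - γ`, this keeps `N (x t)`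
below the barrier `M e^{-γt}`; the comparison principle only needs this estimate where `N (x t)`
touches the barrier, i.e. while `x t` is still in the ball where the bound on `f` holds.
-/

open NormedSpace Filter Topology Set Finset
open scoped NNReal Nat Matrix Matrix.Norms.Operator

lemma Real.pow_div_factorial_le_exp_mul_div_pow {c t : ℝ} (hc : 0 < c) (ht : 0 ≤ t) (j : ℕ) :
    t ^ j / j ! ≤ Real.exp (c * t) / c ^ j := by
  have := Real.pow_div_factorial_le_exp _ (mul_nonneg hc.le ht) j
  rw [mul_pow] at this
  rw [le_div_iff₀ (by positivity)]
  calc t ^ j / j ! * c ^ j = c ^ j * t ^ j / j ! := by ring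
    _ ≤ Real.exp (c * t) := this

section MatrixDecay

variable {ι : Type*} [Fintype ι] [DecidableEq ι]

lemma Matrix.pow_mulVec_eq_zero_of_le {R : Type*} [CommRing R] {N : Matrix ι ι R} {v : ι → R}
    {k j : ℕ} (hv : (N ^ k) *ᵥ v = 0) (hkj : k ≤ j) : (N ^ j) *ᵥ v = 0 := by
  rw [← Nat.sub_add_cancel hkj, pow_add, ← Matrix.mulVec_mulVec, hv, Matrix.mulVec_zero]

lemma Matrix.exp_smul_mulVec_eq_sum (B : Matrix ι ι ℂ) {μ : ℂ} {k : ℕ} {v : ι → ℂ}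
    (hv : ((B - μ • 1) ^ k) *ᵥ v = 0) (z : ℂ) :
    exp (z • B) *ᵥ v = Complex.exp (z * μ) •
      ∑ j ∈ range k, ((j ! : ℂ)⁻¹ * z ^ j) • ((B - μ • 1) ^ j *ᵥ v) := by
  set N := B - μ • 1
  have hsplit : z • B = algebraMap ℂ _ (z * μ) + z • N := by
    rw [Algebra.algebraMap_eq_smul_one, smul_sub, smul_smul]; abel
  have hseries : HasSum (fun j => ((j ! : ℂ)⁻¹ • (z • N) ^ j) *ᵥ v) (exp (z • N) *ᵥ v) :=
    (exp_series_hasSum_exp' (𝕂 := ℂ) (z • N)).map (Matrix.mulVec.addMonoidHomLeft v)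
      (continuous_id.matrix_mulVec continuous_const)
  have hterm (j : ℕ) : ((j ! : ℂ)⁻¹ • (z • N) ^ j) *ᵥ v = ((j ! : ℂ)⁻¹ * z ^ j) • (N ^ j *ᵥ v) := by
    rw [smul_pow, smul_smul, Matrix.smul_mulVec, mul_comm]
  have hfinite : exp (z • N) *ᵥ v = ∑ j ∈ range k, ((j ! : ℂ)⁻¹ * z ^ j) • (N ^ j *ᵥ v) := by
    refine hseries.unique ?_
    simp_rw [hterm]
    exact hasSum_sum_of_ne_finset_zero fun j hj => by
      rw [Matrix.pow_mulVec_eq_zero_of_le hv (by simpa using hj), smul_zero]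
  have hscalar : exp (algebraMap ℂ (Matrix ι ι ℂ) (z * μ))
      = algebraMap ℂ (Matrix ι ι ℂ) (Complex.exp (z * μ)) := by
    rw [Complex.exp_eq_exp_ℂ]; exact (algebraMap_exp_comm _).symm
  rw [hsplit, Matrix.exp_add_of_commute _ _ (Algebra.commute_algebraMap_left _ _), hscalar,
    ← Algebra.smul_def, Matrix.smul_mulVec, hfinite]

lemma Matrix.exists_norm_exp_smul_mulVec_le_of_pow_mulVec_eq_zero (B : Matrix ι ι ℂ) {μ : ℂ}
    {α : ℝ} (hμ : μ.re < -α) {k : ℕ} {v : ι → ℂ} (hv : ((B - μ • 1) ^ k) *ᵥ v = 0) :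
    ∃ K, ∀ t : ℝ, 0 ≤ t → ‖exp ((t : ℂ) • B) *ᵥ v‖ ≤ K * Real.exp (-α * t) := by
  set c := -μ.re - α
  have hc : 0 < c := by linarith
  set w : ℕ → ι → ℂ := fun j => (B - μ • 1) ^ j *ᵥ v
  refine ⟨∑ j ∈ range k, ‖w j‖ / c ^ j, fun t ht => ?_⟩
  rw [Matrix.exp_smul_mulVec_eq_sum B hv, norm_smul, Complex.norm_exp]
  calc Real.exp ((t * μ).re) * ‖∑ j ∈ range k, ((j ! : ℂ)⁻¹ * (t : ℂ) ^ j) • w j‖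
      ≤ Real.exp (t * μ.re) * ∑ j ∈ range k, Real.exp (c * t) / c ^ j * ‖w j‖ := by
        rw [Complex.re_ofReal_mul]
        gcongr
        refine (norm_sum_le _ _).trans (sum_le_sum fun j _ => ?_)
        rw [norm_smul, norm_mul, norm_inv, norm_pow, Complex.norm_natCast, Complex.norm_real,
          Real.norm_of_nonneg ht, inv_mul_eq_div]
        exact mul_le_mul_of_nonneg_right (Real.pow_div_factorial_le_exp_mul_div_pow hc ht j)
          (norm_nonneg _)
    _ = (∑ j ∈ range k, ‖w j‖ / c ^ j) * Real.exp (-α * t) := by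
        have hexp : Real.exp (t * μ.re) * Real.exp (c * t) = Real.exp (-α * t) := by
          rw [← Real.exp_add]; congr 1; ring
        rw [mul_sum, sum_mul, ← hexp]
        exact sum_congr rfl fun j _ => by ring

lemma Matrix.mem_spectrum_of_pow_mulVec_eq_zero {K : Type*} [Field K] {B : Matrix ι ι K} {μ : K}
    {k : ℕ} {v : ι → K} (hv : ((B - μ • 1) ^ k) *ᵥ v = 0) (hv0 : v ≠ 0) : μ ∈ spectrum K B := by
  by_contra h
  rw [spectrum.notMem_iff, Algebra.algebraMap_eq_smul_one, ← neg_sub, IsUnit.neg_iff] at h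
  exact hv0 (Matrix.mulVec_injective_iff_isUnit.2 (h.pow k) (hv.trans (Matrix.mulVec_zero _).symm))

lemma Matrix.exists_spectral_gap {K : Type*} [Field K] (B : Matrix ι ι K) (re : K → ℝ)
    (hB : ∀ μ ∈ spectrum K B, re μ < 0) : ∃ α > 0, ∀ μ ∈ spectrum K B, re μ < -α := by
  have : ∀ᶠ α in 𝓝[>] (0 : ℝ), ∀ μ ∈ spectrum K B, re μ < -α :=
    B.finite_spectrum.eventually_all.2 fun μ hμ => nhdsWithin_le_nhds <|
      (continuous_neg.tendsto' 0 0 neg_zero).eventually (lt_mem_nhds (hB μ hμ))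
  exact (this.and self_mem_nhdsWithin).exists.imp fun α h => ⟨h.2, h.1⟩

lemma Matrix.exists_norm_exp_smul_mulVec_le_of_re_lt_neg (B : Matrix ι ι ℂ) {α : ℝ}
    (hgap : ∀ μ ∈ spectrum ℂ B, μ.re < -α) (v : ι → ℂ) :
    ∃ K, ∀ t : ℝ, 0 ≤ t → ‖exp ((t : ℂ) • B) *ᵥ v‖ ≤ K * Real.exp (-α * t) := by
  have hv : v ∈ ⨆ μ, Module.End.maxGenEigenspace (Matrix.toLinAlgEquiv' B) μ := by
    rw [Module.End.iSup_maxGenEigenspace_eq_top]; trivial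
  induction hv using Submodule.iSup_induction' with
  | mem μ w hw =>
    obtain ⟨k, hk⟩ := (Module.End.mem_maxGenEigenspace _ _ _).1 hw
    replace hk : ((B - μ • 1) ^ k) *ᵥ w = 0 := by
      rwa [← Matrix.toLinAlgEquiv'_apply, map_pow, map_sub, map_smul, map_one]
    rcases eq_or_ne w 0 with rfl | hw0
    · exact ⟨0, fun t _ => by simp⟩
    exact B.exists_norm_exp_smul_mulVec_le_of_pow_mulVec_eq_zero
      (hgap μ (Matrix.mem_spectrum_of_pow_mulVec_eq_zero hk hw0)) hk
  | zero => exact ⟨0, fun t _ => by simp⟩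
  | add w₁ w₂ _ _ h₁ h₂ =>
    obtain ⟨K₁, h₁⟩ := h₁
    obtain ⟨K₂, h₂⟩ := h₂
    refine ⟨K₁ + K₂, fun t ht => ?_⟩
    rw [Matrix.mulVec_add, add_mul]
    exact (norm_add_le _ _).trans (add_le_add (h₁ t ht) (h₂ t ht))

lemma Matrix.exists_norm_exp_smul_mulVec_le_of_re_neg (B : Matrix ι ι ℂ)
    (hB : ∀ μ ∈ spectrum ℂ B, μ.re < 0) :
    ∃ C α, 0 < C ∧ 0 < α ∧
      ∀ t : ℝ, 0 ≤ t → ∀ v, ‖exp ((t : ℂ) • B) *ᵥ v‖ ≤ C * Real.exp (-α * t) * ‖v‖ := by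
  obtain ⟨α, hα, hgap⟩ := B.exists_spectral_gap Complex.re hB
  choose K hK using fun i : ι => B.exists_norm_exp_smul_mulVec_le_of_re_lt_neg hgap (Pi.single i 1)
  refine ⟨1 + ∑ i, |K i|, α, by positivity, hα, fun t ht v => ?_⟩
  have hv : exp ((t : ℂ) • B) *ᵥ v = ∑ i, v i • exp ((t : ℂ) • B) *ᵥ Pi.single i 1 := by
    conv_lhs => rw [← univ_sum_single v]
    simp [Matrix.mulVec_sum]
  calc ‖exp ((t : ℂ) • B) *ᵥ v‖ ≤ ∑ i, ‖v‖ * (|K i| * Real.exp (-α * t)) := by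
        rw [hv]
        refine (norm_sum_le _ _).trans (sum_le_sum fun i _ => ?_)
        rw [norm_smul]
        exact mul_le_mul (norm_le_pi_norm v i) ((hK i t ht).trans (by gcongr; exact le_abs_self _))
          (norm_nonneg _) (norm_nonneg _)
    _ ≤ (1 + ∑ i, |K i|) * Real.exp (-α * t) * ‖v‖ := by
        rw [← mul_sum, ← sum_mul]
        nlinarith [norm_nonneg v, Real.exp_pos (-α * t)]

end MatrixDecay

section AdaptedNorm

variable {E : Type*} [NormedAddCommGroup E] [NormedSpace ℝ E]

def ExpDecayBound (L : E →L[ℝ] E) (C α : ℝ) : Prop :=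
  ∀ t ≥ (0 : ℝ), ∀ v, ‖exp (t • L) v‖ ≤ C * Real.exp (-α * t) * ‖v‖

noncomputable def adaptedNorm (L : E →L[ℝ] E) (α : ℝ) (v : E) : ℝ :=
  ⨆ s : ℝ≥0, Real.exp (α * s) * ‖exp ((s : ℝ) • L) v‖

variable {L : E →L[ℝ] E} {C α : ℝ}

lemma ExpDecayBound.exp_mul_norm_le (hL : ExpDecayBound L C α) {s : ℝ} (hs : 0 ≤ s) (v : E) :
    Real.exp (α * s) * ‖exp (s • L) v‖ ≤ C * ‖v‖ := by
  calc Real.exp (α * s) * ‖exp (s • L) v‖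
      ≤ Real.exp (α * s) * (C * Real.exp (-α * s) * ‖v‖) := by gcongr; exact hL s hs v
    _ = C * ‖v‖ := by
      rw [show -α * s = -(α * s) by ring, Real.exp_neg]; field_simp

lemma ExpDecayBound.bddAbove (hL : ExpDecayBound L C α) (v : E) :
    BddAbove (range fun s : ℝ≥0 => Real.exp (α * s) * ‖exp ((s : ℝ) • L) v‖) :=
  ⟨C * ‖v‖, forall_mem_range.2 fun s => hL.exp_mul_norm_le s.2 v⟩

lemma ExpDecayBound.norm_le_adaptedNorm (hL : ExpDecayBound L C α) (v : E) :
    ‖v‖ ≤ adaptedNorm L α v :=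
  calc ‖v‖ = Real.exp (α * (0 : ℝ≥0)) * ‖exp (((0 : ℝ≥0) : ℝ) • L) v‖ := by simp
    _ ≤ adaptedNorm L α v := le_ciSup (hL.bddAbove v) 0

lemma ExpDecayBound.adaptedNorm_le (hL : ExpDecayBound L C α) (v : E) :
    adaptedNorm L α v ≤ C * ‖v‖ :=
  ciSup_le fun s => hL.exp_mul_norm_le s.2 v

lemma ExpDecayBound.adaptedNorm_add_le (hL : ExpDecayBound L C α) (v w : E) :
    adaptedNorm L α (v + w) ≤ adaptedNorm L α v + adaptedNorm L α w :=
  ciSup_le fun s => by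
    rw [map_add]
    calc Real.exp (α * s) * ‖exp ((s : ℝ) • L) v + exp ((s : ℝ) • L) w‖
        ≤ Real.exp (α * s) * ‖exp ((s : ℝ) • L) v‖ + Real.exp (α * s) * ‖exp ((s : ℝ) • L) w‖ := by
          rw [← mul_add]; gcongr; exact norm_add_le _ _
      _ ≤ adaptedNorm L α v + adaptedNorm L α w :=
          add_le_add (le_ciSup (hL.bddAbove v) s) (le_ciSup (hL.bddAbove w) s)

lemma ExpDecayBound.adaptedNorm_exp_smul_le [CompleteSpace E] (hL : ExpDecayBound L C α)
    {h : ℝ} (hh : 0 ≤ h) (v : E) :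
    adaptedNorm L α (exp (h • L) v) ≤ Real.exp (-α * h) * adaptedNorm L α v := by
  -- `exp_add_of_commute` is stated for `ℚ`-algebras
  let : NormedAlgebra ℚ (E →L[ℝ] E) := .restrictScalars ℚ ℝ _
  refine ciSup_le fun s => ?_
  have hsh : exp ((s : ℝ) • L) (exp (h • L) v) = exp (((s : ℝ) + h) • L) v := by
    rw [add_smul, exp_add_of_commute ((Commute.refl L).smul_left _ |>.smul_right _)]; rfl
  have hs : Real.exp (α * (s + h)) * ‖exp (((s : ℝ) + h) • L) v‖ ≤ adaptedNorm L α v :=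
    le_ciSup (hL.bddAbove v) ⟨s + h, by positivity⟩
  rw [hsh]
  calc Real.exp (α * s) * ‖exp (((s : ℝ) + h) • L) v‖
      = Real.exp (-α * h) * (Real.exp (α * (s + h)) * ‖exp (((s : ℝ) + h) • L) v‖) := by
        rw [← mul_assoc, ← Real.exp_add]; ring_nf
    _ ≤ Real.exp (-α * h) * adaptedNorm L α v := by gcongr

lemma ExpDecayBound.lipschitzWith_adaptedNorm (hL : ExpDecayBound L C α) (hC : 0 ≤ C) :
    LipschitzWith ⟨C, hC⟩ (adaptedNorm L α) :=
  LipschitzWith.of_le_add_mul _ fun v w => by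
    calc adaptedNorm L α v = adaptedNorm L α (w + (v - w)) := by rw [add_sub_cancel]
      _ ≤ adaptedNorm L α w + C * dist v w := by
        rw [dist_eq_norm]
        exact (hL.adaptedNorm_add_le _ _).trans (by gcongr; exact hL.adaptedNorm_le _)

lemma ExpDecayBound.adaptedNorm_le_exp_mul_add [CompleteSpace E] (hL : ExpDecayBound L C α)
    {h : ℝ} (hh : 0 ≤ h) (v w : E) :
    adaptedNorm L α w ≤ Real.exp (-α * h) * adaptedNorm L α v + C * ‖w - exp (h • L) v‖ :=
  calc adaptedNorm L α w = adaptedNorm L α (exp (h • L) v + (w - exp (h • L) v)) := by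
        rw [add_sub_cancel]
    _ ≤ _ := (hL.adaptedNorm_add_le _ _).trans <|
        add_le_add (hL.adaptedNorm_exp_smul_le hh _) (hL.adaptedNorm_le _)

lemma ExpDecayBound.eventually_slope_adaptedNorm_lt [CompleteSpace E] (hL : ExpDecayBound L C α)
    {x : ℝ → E} {t : ℝ} {F : E} (hx : HasDerivAt x (L (x t) + F) t) {r : ℝ}
    (hr : -α * adaptedNorm L α (x t) + C * ‖F‖ < r) :
    ∀ᶠ z in 𝓝[>] t, slope (adaptedNorm L α ∘ x) t z < r := by
  set g : ℝ → ℝ := fun z => Real.exp (-α * (z - t))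
  set G : ℝ → E := fun z => x z - exp ((z - t) • L) (x t)
  have hg : HasDerivAt g (-α) t := by
    simpa [g] using (((hasDerivAt_id t).sub_const t).const_mul (-α)).exp
  have hG : HasDerivAt G F t := by
    have hflow : HasDerivAt (fun z => exp ((z - t) • L) (x t)) (L (x t)) t := by
      simpa using ((hasDerivAt_exp_smul_const L (t - t)).comp_sub_const t t).clm_apply
        (hasDerivAt_const t (x t))
    exact (hx.sub hflow).congr_deriv (add_sub_cancel_left _ _)
  have hlim : Tendsto (fun z => slope g t z * adaptedNorm L α (x t) + C * ‖slope G t z‖)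
      (𝓝[>] t) (𝓝 (-α * adaptedNorm L α (x t) + C * ‖F‖)) := by
    have hg' := (hasDerivWithinAt_iff_tendsto_slope' (lt_irrefl t)).1
      (hg.hasDerivWithinAt (s := Ioi t))
    have hG' := (hasDerivWithinAt_iff_tendsto_slope' (lt_irrefl t)).1
      (hG.hasDerivWithinAt (s := Ioi t))
    exact (hg'.mul_const _).add (hG'.norm.const_mul C)
  filter_upwards [hlim.eventually (gt_mem_nhds hr), self_mem_nhdsWithin] with z hz htz
  refine lt_of_le_of_lt ?_ hz
  have hpos : 0 < z - t := sub_pos.2 htz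
  have hgt : g t = 1 := by simp [g]
  have hGt : G t = 0 := by simp [G]
  rw [slope_def_field, slope_def_field, slope_def_module, hGt, sub_zero, norm_smul,
    Real.norm_of_nonneg (inv_nonneg.2 hpos.le), hgt, div_le_iff₀ hpos]
  have hstep : adaptedNorm L α (x z) ≤ g z * adaptedNorm L α (x t) + C * ‖G z‖ :=
    hL.adaptedNorm_le_exp_mul_add (sub_nonneg.2 htz.le) _ _
  have hrhs : ((g z - 1) / (z - t) * adaptedNorm L α (x t) + C * ((z - t)⁻¹ * ‖G z‖)) * (z - t)
      = (g z - 1) * adaptedNorm L α (x t) + C * ‖G z‖ := by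
    field_simp
  rw [hrhs, Function.comp_apply, Function.comp_apply]
  linarith

theorem ExpDecayBound.adaptedNorm_solution_le [CompleteSpace E] (hL : ExpDecayBound L C α)
    (hC : 0 ≤ C) {f : E → E} {k M γ : ℝ} (hk : 0 ≤ k) (hM : 0 < M) (hγ : 0 ≤ γ)
    (hγk : γ + C * k < α) (hf : ∀ v, ‖v‖ ≤ M → ‖f v‖ ≤ k * ‖v‖) {x : ℝ → E}
    (hx : ∀ t ≥ 0, HasDerivAt x (L (x t) + f (x t)) t) (h0 : adaptedNorm L α (x 0) ≤ M)
    {t : ℝ} (ht : 0 ≤ t) : adaptedNorm L α (x t) ≤ M * Real.exp (-γ * t) := by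
  have hB : ∀ s, HasDerivAt (fun s => M * Real.exp (-γ * s)) (-γ * (M * Real.exp (-γ * s))) s :=
    fun s => (((hasDerivAt_id' s).const_mul (-γ)).exp.const_mul M).congr_deriv (by ring)
  refine image_le_of_liminf_slope_right_lt_deriv_boundary
    (f' := fun s => -α * adaptedNorm L α (x s) + C * ‖f (x s)‖)
    (fun s hs => ((hL.lipschitzWith_adaptedNorm hC).continuous.continuousAt.comp
      (hx s hs.1).continuousAt).continuousWithinAt)
    (fun s hs r hr => (hL.eventually_slope_adaptedNorm_lt (hx s hs.1) hr).frequently)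
    (by simpa using h0) hB (fun s hs hcontact => ?_) ⟨ht, le_rfl⟩
  set b := M * Real.exp (-γ * s)
  have hb : 0 < b := by positivity
  have hbM : b ≤ M := mul_le_of_le_one_right hM.le (Real.exp_le_one_iff.2 (by nlinarith [hs.1]))
  have hxs : ‖x s‖ ≤ b := (hL.norm_le_adaptedNorm _).trans hcontact.le
  have hfx : C * ‖f (x s)‖ ≤ C * k * b := by
    rw [mul_assoc]; gcongr; exact (hf _ (hxs.trans hbM)).trans (by gcongr)
  show -α * adaptedNorm L α (x s) + C * ‖f (x s)‖ < -γ * b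
  rw [show adaptedNorm L α (x s) = b from hcontact]
  nlinarith

def AsymptoticallyStableAtZero (F : E → E) : Prop :=
  ∀ ε > 0, ∃ δ > 0, ∀ x : ℝ → E, (∀ t ≥ (0 : ℝ), HasDerivAt x (F (x t)) t) → ‖x 0‖ < δ →
    (∀ t ≥ (0 : ℝ), ‖x t‖ < ε) ∧ Tendsto x atTop (𝓝 0)

theorem ExpDecayBound.asymptoticallyStableAtZero [CompleteSpace E] (hL : ExpDecayBound L C α)
    (hC : 0 < C) (hα : 0 < α) {f : E → E} (hf : f =o[𝓝 0] id) :
    AsymptoticallyStableAtZero fun v => L v + f v := by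
  obtain ⟨r, hr, hfr⟩ := Metric.eventually_nhds_iff.1 (hf.def (c := α / (2 * C)) (by positivity))
  intro ε hε
  obtain ⟨M, hM, hMr, hMε⟩ : ∃ M, 0 < M ∧ M < r ∧ M < ε :=
    ⟨min r ε / 2, by positivity, by linarith [min_le_left r ε, lt_min hr hε],
      by linarith [min_le_right r ε, lt_min hr hε]⟩
  refine ⟨M / C, by positivity, fun x hx hx0 => ?_⟩
  have hbound : ∀ t ≥ 0, ‖x t‖ ≤ M * Real.exp (-(α / 4) * t) := fun t ht =>
    (hL.norm_le_adaptedNorm _).trans <| hL.adaptedNorm_solution_le hC.le (by positivity) hM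
      (by positivity) (by field_simp; linarith)
      (fun v hv => hfr (by rw [dist_zero_right]; linarith)) hx
      ((hL.adaptedNorm_le _).trans (by rw [lt_div_iff₀ hC] at hx0; linarith)) ht
  refine ⟨fun t ht => (hbound t ht).trans_lt ?_, ?_⟩
  · exact (mul_le_of_le_one_right hM.le (Real.exp_le_one_iff.2 (by nlinarith))).trans_lt hMε
  · refine squeeze_zero_norm' (eventually_atTop.2 ⟨0, hbound⟩) ?_
    simpa using (Real.tendsto_exp_atBot.comp
      (tendsto_id.const_mul_atTop_of_neg (by linarith : -(α / 4) < 0))).const_mul M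

end AdaptedNorm

section Linearization

variable {ι : Type*} [Fintype ι] [DecidableEq ι]

lemma Matrix.exp_smul_toContinuousLinearMap_apply (A : Matrix ι ι ℝ) (t : ℝ) (v : ι → ℝ) :
    exp (t • LinearMap.toContinuousLinearMap (Matrix.toLin' A)) v = exp (t • A) *ᵥ v := by
  let Φ : Matrix ι ι ℝ →ₐ[ℝ] (ι → ℝ) →L[ℝ] (ι → ℝ) :=
    (Module.End.toContinuousLinearMap (ι → ℝ)).toAlgHom.comp Matrix.toLinAlgEquiv'.toAlgHom
  have hexp := map_exp Φ (LinearMap.continuous_of_finiteDimensional Φ.toLinearMap) (t • A)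
  rw [map_smul] at hexp
  exact (congrArg (· v) hexp).symm

lemma Matrix.map_ofReal_exp_smul (A : Matrix ι ι ℝ) (t : ℝ) :
    (exp (t • A)).map (fun a => (a : ℂ)) = exp ((t : ℂ) • A.map (fun a => (a : ℂ))) := by
  have hexp := map_exp (RingHom.mapMatrix (algebraMap ℝ ℂ))
    (continuous_id.matrix_map Complex.continuous_ofReal) (t • A)
  have hscalar : (algebraMap ℝ ℂ).mapMatrix (t • A) = (t : ℂ) • A.map (fun a => (a : ℂ)) := by
    ext i j
    simp
  rw [hscalar] at hexp
  exact hexp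

lemma Matrix.expDecayBound_toContinuousLinearMap (A : Matrix ι ι ℝ)
    (hA : ∀ μ ∈ spectrum ℂ (A.map (fun a => (a : ℂ))), μ.re < 0) :
    ∃ C α, 0 < C ∧ 0 < α ∧
      ExpDecayBound (LinearMap.toContinuousLinearMap (Matrix.toLin' A)) C α := by
  obtain ⟨C, α, hC, hα, hdecay⟩ :=
    (A.map (fun a => (a : ℂ))).exists_norm_exp_smul_mulVec_le_of_re_neg hA
  refine ⟨C, α, hC, hα, fun t ht v => ?_⟩
  have hnorm (w : ι → ℝ) : ‖fun i => (w i : ℂ)‖ = ‖w‖ := by simp [Pi.norm_def]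
  have hcomplexify : (fun i => ((exp (t • A) *ᵥ v) i : ℂ))
      = exp ((t : ℂ) • A.map (fun a => (a : ℂ))) *ᵥ fun i => (v i : ℂ) := by
    ext i
    rw [← Matrix.map_ofReal_exp_smul]
    exact RingHom.map_mulVec (algebraMap ℝ ℂ) _ v i
  rw [Matrix.exp_smul_toContinuousLinearMap_apply, ← hnorm, hcomplexify, ← hnorm v]
  exact hdecay t ht _

end Linearization

lemma isLittleO_id_of_tendsto_norm_div {E F : Type*} [NormedAddCommGroup E] [NormedAddCommGroup F]
    {f : E → F} (hf0 : f 0 = 0) (h : Tendsto (fun x => ‖f x‖ / ‖x‖) (𝓝[≠] 0) (𝓝 0)) :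
    f =o[𝓝 0] id := by
  have hpunctured : f =o[𝓝[≠] 0] id := by
    rw [← Asymptotics.isLittleO_norm_norm, Asymptotics.isLittleO_iff_tendsto fun x hx => by
      obtain rfl : x = 0 := norm_eq_zero.1 hx
      rw [hf0, norm_zero]]
    exact h
  have := (Asymptotics.isLittleO_insert (s := {0}ᶜ) hf0).2 hpunctured
  rwa [Set.insert_eq, Set.union_compl_self, nhdsWithin_univ] at this

theorem stmt_13_general (n : ℕ) (A : Matrix (Fin n) (Fin n) ℝ)
    (hA : ∀ μ ∈ spectrum ℂ (A.map (fun a => (a : ℂ))), μ.re < 0)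
    (f : (Fin n → ℝ) → (Fin n → ℝ))
    (hf0 : f 0 = 0)
    (hsmall : Filter.Tendsto (fun x => ‖f x‖ / ‖x‖)
      (nhdsWithin 0 {(0 : Fin n → ℝ)}ᶜ) (nhds 0)) :
    ∀ ε > 0, ∃ δ > 0, ∀ x : ℝ → (Fin n → ℝ),
      (∀ t ≥ (0 : ℝ), HasDerivAt x (A.mulVec (x t) + f (x t)) t) →
      ‖x 0‖ < δ →
      (∀ t ≥ (0 : ℝ), ‖x t‖ < ε) ∧ Filter.Tendsto x Filter.atTop (nhds 0) := by
  obtain ⟨C, α, hC, hα, hL⟩ := A.expDecayBound_toContinuousLinearMap hA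
  exact hL.asymptoticallyStableAtZero hC hα (isLittleO_id_of_tendsto_norm_div hf0 hsmall)

/-- Linearized (asymptotic) stability: if all eigenvalues of the real `n×n` matrix `A`
have strictly negative real part, and `f` is continuous, locally Lipschitz, with
`f(0) = 0` and `‖f(x)‖/‖x‖ → 0` as `x → 0`, then the origin is asymptotically stable
for `ẋ = Ax + f(x)`. -/
theorem stmt_13 (n : ℕ) (A : Matrix (Fin n) (Fin n) ℝ)
    (hA : ∀ μ ∈ spectrum ℂ (A.map (fun a => (a : ℂ))), μ.re < 0)
    (f : (Fin n → ℝ) → (Fin n → ℝ))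
    (hfc : Continuous f) (hfl : LocallyLipschitz f) (hf0 : f 0 = 0)
    (hsmall : Filter.Tendsto (fun x => ‖f x‖ / ‖x‖)
      (nhdsWithin 0 {(0 : Fin n → ℝ)}ᶜ) (nhds 0)) :
    ∀ ε > 0, ∃ δ > 0, ∀ x : ℝ → (Fin n → ℝ),
      (∀ t ≥ (0 : ℝ), HasDerivAt x (A.mulVec (x t) + f (x t)) t) →
      ‖x 0‖ < δ →
      (∀ t ≥ (0 : ℝ), ‖x t‖ < ε) ∧ Filter.Tendsto x Filter.atTop (nhds 0) :=
  stmt_13_general n A hA f hf0 hsmall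
end
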